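/- Let A be an LM_θ-algebra with dual space (X(A),{f_i^A}_{i∈I}), and let a,b ∈ A with a ≤ b. For an open subset G of X(A) whose complement is semimodal, the following are equivalent: (i) Θ_OS(G) is the principal LM_θ-congruence Θ(a,b) generated by (a,b); (ii) G is the least open subset of X(A) with semimodal complement (ordered by inclusion) containing σ_A(b)\σ_A(a); (iii) G = (σ_A(b)\σ_A(a)) ∪ ⋃_{i∈I} (f_i^A)^{-1}(σ_A(b)\σ_A(a)); (iv) G = (σ_A(b)\σ_A(a)) ∪ ⋃_{i∈I} σ_A(φ_i b ∧ φ̄_i a). -/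

import Mathlib

/-- An LM_θ-algebra over a linearly ordered index set `I`:
a bounded distributive lattice with operations `phi i` and `phibar i`. -/
structure LMAlg (I A : Type*) [LinearOrder I] [DistribLattice A] [BoundedOrder A] where
  phi : I → A → A
  phibar : I → A → A
  phi_sup : ∀ i x y, phi i (x ⊔ y) = phi i x ⊔ phi i y
  phi_inf : ∀ i x y, phi i (x ⊓ y) = phi i x ⊓ phi i y
  phi_bot : ∀ i, phi i ⊥ = ⊥
  phi_top : ∀ i, phi i ⊤ = ⊤
  sup_phibar : ∀ i x, phi i x ⊔ phibar i x = ⊤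
  inf_phibar : ∀ i x, phi i x ⊓ phibar i x = ⊥
  phi_phi : ∀ i j x, phi i (phi j x) = phi j x
  phi_mono : ∀ ⦃i j : I⦄, i ≤ j → ∀ x, phi i x ≤ phi j x
  determined : ∀ x y, (∀ i, phi i x = phi i y) → x = y

/-- A prime filter of a bounded distributive lattice. -/
structure PrimeFilter (A : Type*) [DistribLattice A] [BoundedOrder A] where
  carrier : Set A
  top_mem : ⊤ ∈ carrier
  bot_notMem : ⊥ ∉ carrier
  mem_of_le : ∀ {a b : A}, a ∈ carrier → a ≤ b → b ∈ carrier
  inf_mem : ∀ {a b : A}, a ∈ carrier → b ∈ carrier → a ⊓ b ∈ carrier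
  prime : ∀ {a b : A}, a ⊔ b ∈ carrier → a ∈ carrier ∨ b ∈ carrier

variable {I A : Type*} [LinearOrder I] [DistribLattice A] [BoundedOrder A]

/-- Prime filters ordered by inclusion. -/
instance : PartialOrder (PrimeFilter A) where
  le P Q := P.carrier ⊆ Q.carrier
  le_refl _ _ hx := hx
  le_trans _ _ _ h1 h2 _ hx := h2 (h1 hx)
  le_antisymm P Q h1 h2 := by
    cases P; cases Q
    simp only [PrimeFilter.mk.injEq]
    exact subset_antisymm h1 h2

/-- The map `σ_A`. -/
def sigmaA (a : A) : Set (PrimeFilter A) := {P | a ∈ P.carrier}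

/-- The Priestley topology on the set of prime filters, with sub-basis the sets
`σ_A a` and their complements. -/
instance : TopologicalSpace (PrimeFilter A) :=
  TopologicalSpace.generateFrom
    (Set.range (sigmaA (A := A)) ∪ Set.range (fun a : A => (sigmaA a)ᶜ))

/-- The map `f_i^A (P) = φ_i⁻¹(P)` on prime filters. -/
def LMAlg.fA (L : LMAlg I A) (i : I) (P : PrimeFilter A) : PrimeFilter A where
  carrier := L.phi i ⁻¹' P.carrier
  top_mem := by simp only [Set.mem_preimage, L.phi_top]; exact P.top_mem
  bot_notMem := by simp only [Set.mem_preimage, L.phi_bot]; exact P.bot_notMem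
  mem_of_le := by
    intro a b ha hab
    have h1 : L.phi i b = L.phi i a ⊔ L.phi i b := by
      rw [← L.phi_sup, sup_eq_right.mpr hab]
    exact P.mem_of_le ha (le_sup_left.trans_eq h1.symm)
  inf_mem := by
    intro a b ha hb
    simp only [Set.mem_preimage, L.phi_inf]
    exact P.inf_mem ha hb
  prime := by
    intro a b h
    simp only [Set.mem_preimage, L.phi_sup] at h
    exact P.prime h

/-- An LM_θ-congruence: a bounded-lattice congruence compatible with all `phi i`, `phibar i`. -/
structure IsLMCongr (L : LMAlg I A) (r : A → A → Prop) : Prop where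
  refl : ∀ x, r x x
  symm : ∀ {x y}, r x y → r y x
  trans : ∀ {x y z}, r x y → r y z → r x z
  sup_congr : ∀ {x y u v}, r x y → r u v → r (x ⊔ u) (y ⊔ v)
  inf_congr : ∀ {x y u v}, r x y → r u v → r (x ⊓ u) (y ⊓ v)
  phi_congr : ∀ (i : I) {x y}, r x y → r (L.phi i x) (L.phi i y)
  phibar_congr : ∀ (i : I) {x y}, r x y → r (L.phibar i x) (L.phibar i y)

/-- A θ-congruence: a lattice congruence `r` with `r x y ↔ ∀ i, r (φ_i x) (φ_i y)`. -/
structure IsThetaCongr (L : LMAlg I A) (r : A → A → Prop) : Prop where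
  refl : ∀ x, r x x
  symm : ∀ {x y}, r x y → r y x
  trans : ∀ {x y z}, r x y → r y z → r x z
  sup_congr : ∀ {x y u v}, r x y → r u v → r (x ⊔ u) (y ⊔ v)
  inf_congr : ∀ {x y u v}, r x y → r u v → r (x ⊓ u) (y ⊓ v)
  theta : ∀ x y, r x y ↔ ∀ i : I, r (L.phi i x) (L.phi i y)

/-- `Y` is semimodal if `f i '' Y ⊆ Y` for all `i`. -/
def Semimodal {I X : Type*} (f : I → X → X) (Y : Set X) : Prop := ∀ i, f i '' Y ⊆ Y

/-- `Y` is modal if `f i ⁻¹' Y = Y` for all `i`. -/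
def Modal {I X : Type*} (f : I → X → X) (Y : Set X) : Prop := ∀ i, f i ⁻¹' Y = Y

/-- `Y` is a θ-subset if `⋃ i, f i '' Y ⊆ Y ⊆ closure (⋃ i, f i '' Y)`. -/
def ThetaSubset {I X : Type*} [TopologicalSpace X] (f : I → X → X) (Y : Set X) : Prop :=
  (⋃ i, f i '' Y) ⊆ Y ∧ Y ⊆ closure (⋃ i, f i '' Y)

/-- The relation `Θ` determined by an (open) subset `G` of the dual space:
`(a,b) ∈ Θ(G)` iff `σ_A a △ σ_A b ⊆ G`. -/
def thetaO (G : Set (PrimeFilter A)) : A → A → Prop :=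
  fun a b => symmDiff (sigmaA a) (sigmaA b) ⊆ G

/-- `r` is the principal LM_θ-congruence generated by `(a,b)`. -/
def IsPrincipalLMCongrOn (L : LMAlg I A) (r : A → A → Prop) (a b : A) : Prop :=
  IsLMCongr L r ∧ r a b ∧ ∀ s, IsLMCongr L s → s a b → ∀ x y, r x y → s x y

/-- `r` is the principal θ-congruence generated by `(a,b)`. -/
def IsPrincipalThetaCongrOn (L : LMAlg I A) (r : A → A → Prop) (a b : A) : Prop :=
  IsThetaCongr L r ∧ r a b ∧ ∀ s, IsThetaCongr L s → s a b → ∀ x y, r x y → s x y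

/-- `r` is a principal LM_θ-congruence. -/
def IsPrincipalLMCongr (L : LMAlg I A) (r : A → A → Prop) : Prop :=
  ∃ a b, IsPrincipalLMCongrOn L r a b

/-- `r` is a principal θ-congruence. -/
def IsPrincipalThetaCongr (L : LMAlg I A) (r : A → A → Prop) : Prop :=
  ∃ a b, IsPrincipalThetaCongrOn L r a b

/-- `r` is a Boolean LM_θ-congruence: a complemented element of the lattice of
LM_θ-congruences ordered by inclusion (the bottom element is equality and the
join of `r` and its complement, i.e. the least congruence containing both, is
the total relation). -/
def IsBooleanLMCongr (L : LMAlg I A) (r : A → A → Prop) : Prop :=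
  IsLMCongr L r ∧ ∃ s, IsLMCongr L s ∧
    (∀ x y, (r x y ∧ s x y) ↔ x = y) ∧
    (∀ t, IsLMCongr L t → (∀ x y, r x y → t x y) → (∀ x y, s x y → t x y) → ∀ x y, t x y)


/-!
The relation `thetaO G` only sees `G` through the sets `σ u \ σ v = σ (u ⊓ v) △ σ u`, and
these form a basis of the Priestley topology, so an open `G` is recovered from `thetaO G`.
Hence (i) and (iii) are equivalent once `thetaO G₀` is shown to be `Θ(a,b)` for
`G₀ = D ∪ ⋃ i, (f_i)⁻¹ D` with `D = σ b \ σ a`. It is a congruence because `Gᶜ₀` is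
semimodal (`f_j ∘ f_i = f_j` by `φ_i φ_j = φ_j`), it contains `(a,b)` since
`σ a △ σ b = D`, and it is the least such one by the prime filter theorem applied to the
quotient by a congruence `s ∋ (a,b)`: a prime filter saturated for `s` cannot lie in `G₀`.
The same identity `f_j ∘ f_i = f_j` makes `G₀` the least open set with semimodal complement
containing `D`, which gives (ii), and `(f_i)⁻¹ D = σ (φ_i b ⊓ φ̄_i a)` gives (iv).
-/

open Set

namespace PrimeFilter

variable {B : Type*} [DistribLattice B] [BoundedOrder B]

theorem ext {P Q : PrimeFilter A} (h : P.carrier = Q.carrier) : P = Q :=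
  le_antisymm h.le h.ge

def comap (f : BoundedLatticeHom A B) (P : PrimeFilter B) : PrimeFilter A where
  carrier := f ⁻¹' P.carrier
  top_mem := by simpa only [mem_preimage, map_top] using P.top_mem
  bot_notMem := by simpa only [mem_preimage, map_bot] using P.bot_notMem
  mem_of_le ha hab := P.mem_of_le ha (OrderHomClass.mono f hab)
  inf_mem ha hb := by simpa only [mem_preimage, map_inf] using P.inf_mem ha hb
  prime h := P.prime (by simpa only [mem_preimage, map_sup] using h)

def ofIsPrime {J : Order.Ideal A} (hJ : J.IsPrime) : PrimeFilter A where
  carrier := (J : Set A)ᶜ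
  top_mem := hJ.top_notMem
  bot_notMem h := h J.bot_mem
  mem_of_le ha hab hb := ha (J.lower hab hb)
  inf_mem ha hb h := (hJ.mem_or_mem h).elim ha hb
  prime h := by
    by_contra! hab
    exact h (J.sup_mem (not_not.1 hab.1) (not_not.1 hab.2))

theorem exists_mem_notMem_of_not_le {x y : A} (h : ¬ x ≤ y) :
    ∃ P : PrimeFilter A, x ∈ P.carrier ∧ y ∉ P.carrier := by
  have hdisj : Disjoint (Order.PFilter.principal x : Set A) (Order.Ideal.principal y : Set A) :=
    disjoint_left.2 fun z hxz hzy =>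
      h ((Order.PFilter.mem_principal.1 hxz).trans (Order.Ideal.mem_principal.1 hzy))
  obtain ⟨J, hJ, hyJ, hxJ⟩ := DistribLattice.prime_ideal_of_disjoint_filter_ideal hdisj
  exact ⟨ofIsPrime hJ, disjoint_left.1 hxJ (Order.PFilter.mem_principal.2 le_rfl),
    not_not.2 (hyJ (Order.Ideal.mem_principal.2 le_rfl))⟩

end PrimeFilter

namespace LatticeCon

variable (c : LatticeCon A)

protected def Quotient : Type _ := Quotient c.toSetoid

instance : Max c.Quotient := ⟨Quotient.map₂ (· ⊔ ·) fun _ _ h _ _ h' => c.sup h h'⟩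

instance : Min c.Quotient := ⟨Quotient.map₂ (· ⊓ ·) fun _ _ h _ _ h' => c.inf h h'⟩

instance : Top c.Quotient := ⟨Quotient.mk _ ⊤⟩

instance : Bot c.Quotient := ⟨Quotient.mk _ ⊥⟩

instance : Lattice c.Quotient :=
  Lattice.mk'
    (fun p q => Quotient.inductionOn₂ p q fun x y => congrArg (Quotient.mk _) (sup_comm x y))
    (fun p q r => Quotient.inductionOn₃ p q r fun x y z =>
      congrArg (Quotient.mk _) (sup_assoc x y z))
    (fun p q => Quotient.inductionOn₂ p q fun x y => congrArg (Quotient.mk _) (inf_comm x y))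
    (fun p q r => Quotient.inductionOn₃ p q r fun x y z =>
      congrArg (Quotient.mk _) (inf_assoc x y z))
    (fun p q => Quotient.inductionOn₂ p q fun x y =>
      congrArg (Quotient.mk _) (sup_inf_self (a := x) (b := y)))
    (fun p q => Quotient.inductionOn₂ p q fun x y =>
      congrArg (Quotient.mk _) (inf_sup_self (a := x) (b := y)))

instance : DistribLattice c.Quotient :=
  DistribLattice.ofInfSupLe fun p q r => Quotient.inductionOn₃ p q r fun x y z =>
    le_of_eq (congrArg (Quotient.mk _) (inf_sup_left x y z))

instance : BoundedOrder c.Quotient where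
  le_top p := Quotient.inductionOn p fun x =>
    sup_eq_right.1 (congrArg (Quotient.mk _) (sup_top_eq x))
  bot_le p := Quotient.inductionOn p fun x =>
    sup_eq_right.1 (congrArg (Quotient.mk _) (bot_sup_eq x))

def mkHom : BoundedLatticeHom A c.Quotient where
  toFun := Quotient.mk _
  map_sup' _ _ := rfl
  map_inf' _ _ := rfl
  map_top' := rfl
  map_bot' := rfl

theorem exists_primeFilter_separating {x y : A} (h : ¬ c.r x y) :
    ∃ P : PrimeFilter A, (∀ u v, c.r u v → (u ∈ P.carrier ↔ v ∈ P.carrier)) ∧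
      ¬ (x ∈ P.carrier ↔ y ∈ P.carrier) := by
  have hxy : c.mkHom x ≠ c.mkHom y := fun hxy => h (Quotient.exact hxy)
  have saturated (Q : PrimeFilter c.Quotient) (u v : A) (huv : c.r u v) :
      u ∈ (Q.comap c.mkHom).carrier ↔ v ∈ (Q.comap c.mkHom).carrier := by
    change c.mkHom u ∈ Q.carrier ↔ c.mkHom v ∈ Q.carrier
    rw [show c.mkHom u = c.mkHom v from Quotient.sound huv]
  by_cases hle : c.mkHom x ≤ c.mkHom y
  · obtain ⟨Q, hy, hx⟩ :=
      PrimeFilter.exists_mem_notMem_of_not_le fun hyx => hxy (le_antisymm hle hyx)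
    exact ⟨Q.comap c.mkHom, saturated Q, fun hiff => hx (hiff.2 hy)⟩
  · obtain ⟨Q, hx, hy⟩ := PrimeFilter.exists_mem_notMem_of_not_le hle
    exact ⟨Q.comap c.mkHom, saturated Q, fun hiff => hy (hiff.1 hx)⟩

end LatticeCon

section Semimodal

variable {ι X : Type*} {f : ι → X → X} {H S : Set X}

theorem semimodal_compl_iff : Semimodal f Hᶜ ↔ ∀ i, f i ⁻¹' H ⊆ H := by
  simp only [Semimodal, image_subset_iff, compl_subset_comm (s := H), preimage_compl, compl_compl]

theorem semimodal_compl_union_iUnion_preimage (hf : ∀ i j x, f j (f i x) = f j x) (S : Set X) :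
    Semimodal f (S ∪ ⋃ i, f i ⁻¹' S)ᶜ := by
  refine semimodal_compl_iff.2 fun i x hx => ?_
  rcases hx with hS | hS
  · exact Or.inr (mem_iUnion.2 ⟨i, hS⟩)
  · obtain ⟨j, hj⟩ := mem_iUnion.1 hS
    exact Or.inr (mem_iUnion.2 ⟨j, by rwa [mem_preimage, ← hf i j x]⟩)

theorem union_iUnion_preimage_subset (hH : Semimodal f Hᶜ) (hS : S ⊆ H) :
    S ∪ ⋃ i, f i ⁻¹' S ⊆ H :=
  union_subset hS (iUnion_subset fun i => (preimage_mono hS).trans (semimodal_compl_iff.1 hH i))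

end Semimodal

theorem Set.inter_symmDiff_inter_subset {X : Type*} {s t u v : Set X} :
    symmDiff (s ∩ t) (u ∩ v) ⊆ symmDiff s u ∪ symmDiff t v := by
  grind

section Priestley

theorem sigmaA_mono {a b : A} (h : a ≤ b) : sigmaA a ⊆ sigmaA b := fun P hP => P.mem_of_le hP h

theorem sigmaA_sup (x y : A) : sigmaA (x ⊔ y) = sigmaA x ∪ sigmaA y :=
  Subset.antisymm (fun P h => P.prime h)
    (union_subset (sigmaA_mono le_sup_left) (sigmaA_mono le_sup_right))

theorem sigmaA_inf (x y : A) : sigmaA (x ⊓ y) = sigmaA x ∩ sigmaA y :=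
  Subset.antisymm (subset_inter (sigmaA_mono inf_le_left) (sigmaA_mono inf_le_right))
    fun P h => P.inf_mem h.1 h.2

theorem sigmaA_top : sigmaA (⊤ : A) = univ := eq_univ_of_forall fun P => P.top_mem

theorem sigmaA_bot : sigmaA (⊥ : A) = ∅ := eq_empty_of_forall_notMem fun P => P.bot_notMem

theorem isOpen_sigmaA (x : A) : IsOpen (sigmaA x) :=
  TopologicalSpace.GenerateOpen.basic _ (Or.inl ⟨x, rfl⟩)

theorem isOpen_compl_sigmaA (x : A) : IsOpen (sigmaA x)ᶜ :=
  TopologicalSpace.GenerateOpen.basic _ (Or.inr ⟨x, rfl⟩)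

theorem isOpen_sigmaA_sdiff (x y : A) : IsOpen (sigmaA x \ sigmaA y) :=
  (isOpen_sigmaA x).inter (isOpen_compl_sigmaA y)

theorem sigmaA_sdiff_inter_sigmaA_sdiff (x y u v : A) :
    (sigmaA x \ sigmaA y) ∩ (sigmaA u \ sigmaA v) = sigmaA (x ⊓ u) \ sigmaA (y ⊔ v) := by
  ext P
  simp only [sigmaA_inf, sigmaA_sup, mem_inter_iff, mem_sdiff, mem_union]
  tauto

theorem exists_sigmaA_sdiff_subset_of_isOpen {G : Set (PrimeFilter A)} (hG : IsOpen G)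
    {P : PrimeFilter A} (hP : P ∈ G) :
    ∃ x y : A, P ∈ sigmaA x \ sigmaA y ∧ sigmaA x \ sigmaA y ⊆ G := by
  induction hG with
  | basic s hs =>
    rcases hs with ⟨x, rfl⟩ | ⟨y, rfl⟩
    · exact ⟨x, ⊥, by simpa [sigmaA_bot] using hP, by simp [sigmaA_bot]⟩
    · exact ⟨⊤, y, by simpa [sigmaA_top] using hP, by simp [sigmaA_top]⟩
  | univ => exact ⟨⊤, ⊥, by simp [sigmaA_top, sigmaA_bot], subset_univ _⟩
  | inter s t _ _ ihs iht =>
    obtain ⟨x, y, hPs, hs⟩ := ihs hP.1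
    obtain ⟨u, v, hPt, ht⟩ := iht hP.2
    refine ⟨x ⊓ u, y ⊔ v, ?_, ?_⟩ <;> rw [← sigmaA_sdiff_inter_sigmaA_sdiff]
    exacts [⟨hPs, hPt⟩, inter_subset_inter hs ht]
  | sUnion S _ ih =>
    obtain ⟨t, htS, hPt⟩ := hP
    obtain ⟨x, y, hP, ht⟩ := ih t htS hPt
    exact ⟨x, y, hP, ht.trans (subset_sUnion_of_mem htS)⟩

theorem symmDiff_sigmaA_inf_self (u v : A) :
    symmDiff (sigmaA (u ⊓ v)) (sigmaA u) = sigmaA u \ sigmaA v := by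
  rw [symmDiff_of_le (sigmaA_mono inf_le_left), sigmaA_inf, sdiff_self_inter]

theorem subset_of_thetaO_le {G H : Set (PrimeFilter A)} (hG : IsOpen G)
    (h : ∀ x y, thetaO G x y → thetaO H x y) : G ⊆ H := by
  intro P hP
  obtain ⟨u, v, hPuv, huv⟩ := exists_sigmaA_sdiff_subset_of_isOpen hG hP
  have hθ : thetaO G (u ⊓ v) u := (symmDiff_sigmaA_inf_self u v).trans_subset huv
  exact h _ _ hθ ((symmDiff_sigmaA_inf_self u v).symm ▸ hPuv)

theorem eq_of_thetaO_iff {G H : Set (PrimeFilter A)} (hG : IsOpen G) (hH : IsOpen H)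
    (h : ∀ x y, thetaO G x y ↔ thetaO H x y) : G = H :=
  Subset.antisymm (subset_of_thetaO_le hG fun x y => (h x y).1)
    (subset_of_thetaO_le hH fun x y => (h x y).2)

end Priestley

def IsLMCongr.toLatticeCon {L : LMAlg I A} {r : A → A → Prop} (h : IsLMCongr L r) :
    LatticeCon A where
  r := r
  iseqv := ⟨h.refl, h.symm, h.trans⟩
  inf := h.inf_congr
  sup := h.sup_congr

namespace LMAlg

variable (L : LMAlg I A)

theorem sigmaA_phi (i : I) (x : A) : sigmaA (L.phi i x) = L.fA i ⁻¹' sigmaA x := rfl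

theorem sigmaA_phibar (i : I) (x : A) : sigmaA (L.phibar i x) = (sigmaA (L.phi i x))ᶜ := by
  refine (IsCompl.of_eq ?_ ?_).compl_eq.symm
  · change sigmaA _ ∩ sigmaA _ = ∅
    rw [← sigmaA_inf, L.inf_phibar, sigmaA_bot]
  · change sigmaA _ ∪ sigmaA _ = univ
    rw [← sigmaA_sup, L.sup_phibar, sigmaA_top]

theorem fA_fA (i j : I) (P : PrimeFilter A) : L.fA j (L.fA i P) = L.fA j P :=
  PrimeFilter.ext <| by ext x; exact iff_of_eq (congrArg (· ∈ P.carrier) (L.phi_phi i j x))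

theorem continuous_fA (i : I) : Continuous (L.fA i) := by
  refine continuous_generateFrom_iff.2 ?_
  rintro _ (⟨x, rfl⟩ | ⟨x, rfl⟩)
  · exact isOpen_sigmaA (L.phi i x)
  · exact isOpen_compl_sigmaA (L.phi i x)

theorem preimage_fA_sigmaA_sdiff (i : I) (a b : A) :
    L.fA i ⁻¹' (sigmaA b \ sigmaA a) = sigmaA (L.phi i b ⊓ L.phibar i a) := by
  rw [sigmaA_inf, sigmaA_phibar, ← sdiff_eq, preimage_sdiff, sigmaA_phi, sigmaA_phi]

theorem isLeast_union_iUnion_preimage_fA {S : Set (PrimeFilter A)} (hS : IsOpen S) :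
    IsLeast {H | (IsOpen H ∧ Semimodal L.fA Hᶜ) ∧ S ⊆ H} (S ∪ ⋃ i, L.fA i ⁻¹' S) :=
  ⟨⟨⟨hS.union (isOpen_iUnion fun i => hS.preimage (L.continuous_fA i)),
      semimodal_compl_union_iUnion_preimage L.fA_fA S⟩, subset_union_left⟩,
    fun _ hH => union_iUnion_preimage_subset hH.1.2 hH.2⟩

theorem isLMCongr_thetaO {G : Set (PrimeFilter A)} (hG : Semimodal L.fA Gᶜ) :
    IsLMCongr L (thetaO G) where
  refl x := by simp [thetaO]
  symm h := (symmDiff_comm _ _).trans_subset h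
  trans h₁ h₂ := (symmDiff_triangle _ _ _).trans (union_subset h₁ h₂)
  sup_congr h₁ h₂ := by
    rw [thetaO, sigmaA_sup, sigmaA_sup]
    exact union_symmDiff_union_subset.trans (union_subset h₁ h₂)
  inf_congr h₁ h₂ := by
    rw [thetaO, sigmaA_inf, sigmaA_inf]
    exact inter_symmDiff_inter_subset.trans (union_subset h₁ h₂)
  phi_congr i x y h := by
    rw [thetaO, sigmaA_phi, sigmaA_phi, ← preimage_symmDiff]
    exact (preimage_mono h).trans (semimodal_compl_iff.1 hG i)
  phibar_congr i x y h := by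
    rw [thetaO, sigmaA_phibar, sigmaA_phibar, compl_symmDiff_compl, sigmaA_phi, sigmaA_phi,
      ← preimage_symmDiff]
    exact (preimage_mono h).trans (semimodal_compl_iff.1 hG i)

theorem isPrincipalLMCongrOn_thetaO {a b : A} (hab : a ≤ b) :
    IsPrincipalLMCongrOn L
      (thetaO ((sigmaA b \ sigmaA a) ∪ ⋃ i, L.fA i ⁻¹' (sigmaA b \ sigmaA a))) a b := by
  refine ⟨L.isLMCongr_thetaO (semimodal_compl_union_iUnion_preimage L.fA_fA _), ?_, ?_⟩
  · rw [thetaO, symmDiff_of_le (sigmaA_mono hab)]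
    exact subset_union_left
  · intro s hs hsab x y hxy
    by_contra hsxy
    obtain ⟨P, hsat, hsep⟩ := hs.toLatticeCon.exists_primeFilter_separating hsxy
    have hPxy : P ∈ symmDiff (sigmaA x) (sigmaA y) := by
      rw [mem_symmDiff]
      tauto
    rcases hxy hPxy with ⟨hb, ha⟩ | hP
    · exact ha ((hsat a b hsab).2 hb)
    · obtain ⟨i, hb, ha⟩ := mem_iUnion.1 hP
      exact ha ((hsat _ _ (hs.phi_congr i hsab)).2 hb)

end LMAlg

theorem IsPrincipalLMCongrOn.unique {L : LMAlg I A} {r s : A → A → Prop} {a b : A}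
    (hr : IsPrincipalLMCongrOn L r a b) (hs : IsPrincipalLMCongrOn L s a b) (x y : A) :
    r x y ↔ s x y :=
  ⟨hr.2.2 s hs.1 hs.2.1 x y, hs.2.2 r hr.1 hr.2.1 x y⟩

theorem stmt2_general {I A : Type*} [LinearOrder I] [DistribLattice A] [BoundedOrder A]
    (L : LMAlg I A) (a b : A) (hab : a ≤ b)
    (G : Set (PrimeFilter A)) (hG : IsOpen G) :
    List.TFAE
      [ IsPrincipalLMCongrOn L (thetaO G) a b,
        IsLeast {H : Set (PrimeFilter A) |
          (IsOpen H ∧ Semimodal L.fA Hᶜ) ∧ sigmaA b \ sigmaA a ⊆ H} G,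
        G = (sigmaA b \ sigmaA a) ∪ ⋃ i, L.fA i ⁻¹' (sigmaA b \ sigmaA a),
        G = (sigmaA b \ sigmaA a) ∪ ⋃ i, sigmaA (L.phi i b ⊓ L.phibar i a) ] := by
  have hleast := L.isLeast_union_iUnion_preimage_fA (isOpen_sigmaA_sdiff b a)
  have hprincipal := L.isPrincipalLMCongrOn_thetaO hab
  tfae_have 1 → 3 := fun h => eq_of_thetaO_iff hG hleast.1.1.1 (h.unique hprincipal)
  tfae_have 3 → 1 := fun h => h ▸ hprincipal
  tfae_have 2 → 3 := fun h => h.unique hleast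
  tfae_have 3 → 2 := fun h => h ▸ hleast
  tfae_have 3 ↔ 4 := by simp only [L.preimage_fA_sigmaA_sdiff]
  tfae_finish

/-- characterizations of the open set with semimodal complement determining
the principal LM_θ-congruence `Θ(a,b)`, for `a ≤ b`. -/
theorem stmt2 {I A : Type*} [LinearOrder I] [DistribLattice A] [BoundedOrder A]
    (L : LMAlg I A) (a b : A) (hab : a ≤ b)
    (G : Set (PrimeFilter A)) (hG : IsOpen G) (hG' : Semimodal L.fA Gᶜ) :
    List.TFAE
      [ IsPrincipalLMCongrOn L (thetaO G) a b,
        IsLeast {H : Set (PrimeFilter A) |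
          (IsOpen H ∧ Semimodal L.fA Hᶜ) ∧ sigmaA b \ sigmaA a ⊆ H} G,
        G = (sigmaA b \ sigmaA a) ∪ ⋃ i, L.fA i ⁻¹' (sigmaA b \ sigmaA a),
        G = (sigmaA b \ sigmaA a) ∪ ⋃ i, sigmaA (L.phi i b ⊓ L.phibar i a) ] :=
  stmt2_general L a b hab G hG
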